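/- arXiv:2512.02690 — 3 statements merged into one kernel-verified Lean document; each statement's English description precedes it below -/
import Mathlib

section
/- Suppose g : X × Y → ℝ is convex (jointly) and differentiable, and h : X × Y → ℝ is differentiable, convex in x for each fixed y, and concave in y for each fixed x. If z* = (x*, y*) ∈ X × Y is a Nash equilibrium of the game where Player 1 maximizes u₁ = −g − h over x ∈ X and Player 2 maximizes u₂ = −g + h over y ∈ Y, then Δ(z*) = 0, where Δ(z) = sup_{(x̃,ỹ)∈X×Y} [g(z) − g(x̃,ỹ) + h(x,ỹ) − h(x̃,y)]. -/
/-!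
Put `Φ(x, y) = g(x, y) + h(x, y*) - h(x*, y)`, so that the quantity under the supremum is
`Φ(x*, y*) - Φ(x̃, ỹ)`. The function `Φ` is jointly convex, and the two Nash conditions say
exactly that `x*` minimises `Φ(·, y*)` and `y*` minimises `Φ(x*, ·)`. For a differentiable
convex function the two partial first-order conditions add up to the full one, so `(x*, y*)`
minimises `Φ` on `X × Y`.
-/

open Set

section FirstOrder

variable {E F : Type*} [NormedAddCommGroup E] [NormedSpace ℝ E]
  [NormedAddCommGroup F] [NormedSpace ℝ F]

theorem ConvexOn.hasFDerivAt_sub_le {s : Set E} {f : E → ℝ} {f' : E →L[ℝ] ℝ} {x y : E}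
    (hf : ConvexOn ℝ s f) (hx : x ∈ s) (hy : y ∈ s) (hf' : HasFDerivAt f f' x) :
    f' (y - x) ≤ f y - f x := by
  have hline : HasDerivAt (f ∘ AffineMap.lineMap (k := ℝ) x y) (f' (y - x)) 0 := by
    refine HasFDerivAt.comp_hasDerivAt_of_eq 0 hf' AffineMap.hasDerivAt_lineMap ?_
    simp
  simpa [slope_def_field] using
    (hf.comp_affineMap (AffineMap.lineMap (k := ℝ) x y)).le_slope_of_hasDerivAt
      (by simpa using hx) (by simpa using hy) zero_lt_one hline

theorem IsMinOn.hasFDerivAt_sub_nonneg {s : Set E} {f : E → ℝ} {f' : E →L[ℝ] ℝ} {a x : E}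
    (h : IsMinOn f s a) (hs : Convex ℝ s) (ha : a ∈ s) (hx : x ∈ s)
    (hf' : HasFDerivAt f f' a) : 0 ≤ f' (x - a) :=
  h.localize.hasFDerivWithinAt_nonneg hf'.hasFDerivWithinAt
    (sub_mem_posTangentConeAt_of_segment_subset (hs.segment_subset ha hx))

/-- Fails without differentiability: `(x, y) ↦ max (x - 2 * y) (y - 2 * x)` is minimised at `0`
along both axes of `ℝ × ℝ`, but not on `ℝ × ℝ`. -/
theorem ConvexOn.isMinOn_of_isMinOn_slices {s : Set E} {t : Set F} {f : E × F → ℝ} {a : E}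
    {b : F} (hf : ConvexOn ℝ (s ×ˢ t) f) (hs : Convex ℝ s) (ht : Convex ℝ t) (ha : a ∈ s)
    (hb : b ∈ t) (hfd : DifferentiableAt ℝ f (a, b))
    (h₁ : IsMinOn (fun x ↦ f (x, b)) s a) (h₂ : IsMinOn (fun y ↦ f (a, y)) t b) :
    IsMinOn f (s ×ˢ t) (a, b) := by
  refine isMinOn_iff.2 fun ⟨x, y⟩ ⟨hx, hy⟩ ↦ ?_
  set f' := fderiv ℝ f (a, b)
  have hfst : 0 ≤ f' (x - a, 0) := by
    simpa using h₁.hasFDerivAt_sub_nonneg hs ha hx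
      (hfd.hasFDerivAt.comp a (hasFDerivAt_prodMk_left a b))
  have hsnd : 0 ≤ f' (0, y - b) := by
    simpa using h₂.hasFDerivAt_sub_nonneg ht hb hy
      (hfd.hasFDerivAt.comp b (hasFDerivAt_prodMk_right a b))
  have htangent := hf.hasFDerivAt_sub_le (x := (a, b)) (y := (x, y)) ⟨ha, hb⟩ ⟨hx, hy⟩
    hfd.hasFDerivAt
  have hsplit : f' ((x, y) - (a, b)) = f' (x - a, 0) + f' (0, y - b) := by
    rw [← map_add]; simp
  linarith

theorem ConvexOn.add_comp_fst_sub_comp_snd {s : Set E} {t : Set F} {f : E × F → ℝ}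
    {u : E → ℝ} {v : F → ℝ} (hf : ConvexOn ℝ (s ×ˢ t) f) (hu : ConvexOn ℝ s u)
    (hv : ConcaveOn ℝ t v) : ConvexOn ℝ (s ×ˢ t) (fun p ↦ f p + u p.1 - v p.2) := by
  have hu' : ConvexOn ℝ (s ×ˢ t) (fun p : E × F ↦ u p.1) :=
    (hu.comp_linearMap (LinearMap.fst ℝ E F)).subset (fun _ hp ↦ hp.1) hf.1
  have hv' : ConvexOn ℝ (s ×ˢ t) (fun p : E × F ↦ -v p.2) :=
    (hv.neg.comp_linearMap (LinearMap.snd ℝ E F)).subset (fun _ hp ↦ hp.2) hf.1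
  have hsum : (fun p ↦ f p + u p.1 - v p.2) = f + (fun p ↦ u p.1) + (fun p ↦ -v p.2) := by
    ext p; simp [sub_eq_add_neg]
  exact hsum ▸ (hf.add hu').add hv'

end FirstOrder

theorem nash_implies_delta_zero_general {E F : Type*} [NormedAddCommGroup E] [InnerProductSpace ℝ E]
    [NormedAddCommGroup F] [InnerProductSpace ℝ F]
    (X : Set E) (Y : Set F) (hXc : Convex ℝ X) (hYc : Convex ℝ Y)
    (g h : E × F → ℝ)
    (hg_diff : Differentiable ℝ g) (hh_diff : Differentiable ℝ h)
    (hg_conv : ConvexOn ℝ (X ×ˢ Y) g)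
    (hh_cx : ∀ y ∈ Y, ConvexOn ℝ X (fun x => h (x, y)))
    (hh_cy : ∀ x ∈ X, ConcaveOn ℝ Y (fun y => h (x, y)))
    (xs : E) (ys : F) (hxs : xs ∈ X) (hys : ys ∈ Y)
    (hNash₁ : ∀ x ∈ X, -g (x, ys) - h (x, ys) ≤ -g (xs, ys) - h (xs, ys))
    (hNash₂ : ∀ y ∈ Y, -g (xs, y) + h (xs, y) ≤ -g (xs, ys) + h (xs, ys)) :
    sSup {v : ℝ | ∃ xt ∈ X, ∃ yt ∈ Y,
      v = g (xs, ys) - g (xt, yt) + h (xs, yt) - h (xt, ys)} = 0 := by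
  set Φ : E × F → ℝ := fun p ↦ g p + h (p.1, ys) - h (xs, p.2)
  have hΦ_conv : ConvexOn ℝ (X ×ˢ Y) Φ :=
    hg_conv.add_comp_fst_sub_comp_snd (hh_cx ys hys) (hh_cy xs hxs)
  have hΦ_diff : DifferentiableAt ℝ Φ (xs, ys) := by fun_prop
  have hΦ_min : IsMinOn Φ (X ×ˢ Y) (xs, ys) :=
    hΦ_conv.isMinOn_of_isMinOn_slices hXc hYc hxs hys hΦ_diff
      (isMinOn_iff.2 fun x hx ↦ by simp only [Φ]; linarith [hNash₁ x hx])
      (isMinOn_iff.2 fun y hy ↦ by simp only [Φ]; linarith [hNash₂ y hy])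
  refine IsGreatest.csSup_eq ⟨⟨xs, hxs, ys, hys, by ring⟩, ?_⟩
  rintro _ ⟨xt, hxt, yt, hyt, rfl⟩
  have hle : Φ (xs, ys) ≤ Φ (xt, yt) := hΦ_min ⟨hxt, hyt⟩
  simp only [Φ] at hle
  linarith

theorem nash_implies_delta_zero {E F : Type*} [NormedAddCommGroup E] [InnerProductSpace ℝ E]
    [NormedAddCommGroup F] [InnerProductSpace ℝ F]
    (X : Set E) (Y : Set F) (hXc : Convex ℝ X) (hYc : Convex ℝ Y)
    (hXcp : IsCompact X) (hYcp : IsCompact Y)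
    (g h : E × F → ℝ)
    (hg_diff : Differentiable ℝ g) (hh_diff : Differentiable ℝ h)
    (hg_conv : ConvexOn ℝ (X ×ˢ Y) g)
    (hh_cx : ∀ y ∈ Y, ConvexOn ℝ X (fun x => h (x, y)))
    (hh_cy : ∀ x ∈ X, ConcaveOn ℝ Y (fun y => h (x, y)))
    (xs : E) (ys : F) (hxs : xs ∈ X) (hys : ys ∈ Y)
    (hNash₁ : ∀ x ∈ X, -g (x, ys) - h (x, ys) ≤ -g (xs, ys) - h (xs, ys))
    (hNash₂ : ∀ y ∈ Y, -g (xs, y) + h (xs, y) ≤ -g (xs, ys) + h (xs, ys)) :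
    sSup {v : ℝ | ∃ xt ∈ X, ∃ yt ∈ Y,
      v = g (xs, ys) - g (xt, yt) + h (xs, yt) - h (xt, ys)} = 0 :=
  nash_implies_delta_zero_general X Y hXc hYc g h hg_diff hh_diff hg_conv hh_cx hh_cy xs ys hxs hys
    hNash₁ hNash₂
end

section
/- Descent lemma for ICL: Let g be jointly convex, differentiable, and δ-smooth on X × Y; let h be differentiable with h(·,y) μ-strongly convex and h(x,·) ν-strongly concave; let z* = (x*,y*) be a Nash equilibrium (so that g(z_{t+1}) − g(z*) + h(x_{t+1},y*) − h(x*,y_{t+1}) ≥ 0). Suppose z_{t+1} = (x_{t+1}, y_{t+1}) ∈ X × Y satisfies ⟨∇g(z_t) + H(z_{t+1}) + η_t^{-1}(z_{t+1} − z_t), z_{t+1} − z*⟩ ≤ ε_t, where H(z) = (∇ₓh(z), −∇ᵧh(z)). If η_t ≤ 1/δ, then (1/(2η_t) + min{μ,ν}/2)·‖z_{t+1} − z*‖² ≤ (1/(2η_t))·‖z_t − z*‖² + ε_t. -/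
open scoped RealInnerProductSpace

lemma icl_inner_half {E : Type*} [NormedAddCommGroup E] [InnerProductSpace ℝ E]
    (u v : E) : ⟪u - v, u⟫ = (‖u‖ ^ 2 + ‖u - v‖ ^ 2 - ‖v‖ ^ 2) / 2 := by
  have h1 : ‖u - v‖ ^ 2 = ‖u‖ ^ 2 - 2 * ⟪u, v⟫ + ‖v‖ ^ 2 := norm_sub_sq_real u v
  have h2 : ⟪u - v, u⟫ = ⟪u, u⟫ - ⟪v, u⟫ := inner_sub_left u v u
  have h3 : ⟪u, u⟫ = ‖u‖ ^ 2 := real_inner_self_eq_norm_sq u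
  have h4 : ⟪v, u⟫ = ⟪u, v⟫ := real_inner_comm u v
  linarith


/-- Descent lemma for the Iterative Coupling Linearization (ICL) algorithm. -/
theorem icl_descent_lemma
    {E F : Type*} [NormedAddCommGroup E] [InnerProductSpace ℝ E]
    [NormedAddCommGroup F] [InnerProductSpace ℝ F]
    (X : Set E) (Y : Set F) (hXc : Convex ℝ X) (hYc : Convex ℝ Y)
    (hXcp : IsCompact X) (hYcp : IsCompact Y)
    (g h : E × F → ℝ)
    (Gx : E × F → E) (Gy : E × F → F)  -- partial gradients of the coupling part g
    (Hx : E × F → E) (Hy : E × F → F)  -- partial gradients of the zero-sum part h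
    (μ ν δ ηt εt : ℝ) (hμ : 0 ≤ μ) (hν : 0 ≤ ν) (hδ : 0 ≤ δ)
    (hη : 0 < ηt) (hηδ : δ * ηt ≤ 1)
    -- joint convexity of g (gradient inequality):
    (hg_conv : ∀ z zs : E × F,
      g z - g zs ≤ ⟪Gx z, z.1 - zs.1⟫ + ⟪Gy z, z.2 - zs.2⟫)
    -- δ-smoothness of g (descent inequality):
    (hg_smooth : ∀ z z' : E × F,
      g z' ≤ g z + ⟪Gx z, z'.1 - z.1⟫ + ⟪Gy z, z'.2 - z.2⟫
        + δ / 2 * (‖z'.1 - z.1‖ ^ 2 + ‖z'.2 - z.2‖ ^ 2))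
    -- μ-strong convexity of h(·,y):
    (hh_sc : ∀ (x x' : E) (y : F),
      h (x', y) - h (x, y) ≤ ⟪Hx (x', y), x' - x⟫ - μ / 2 * ‖x' - x‖ ^ 2)
    -- ν-strong concavity of h(x,·):
    (hh_scc : ∀ (x : E) (y y' : F),
      h (x, y) - h (x, y') ≤ ⟪Hy (x, y'), y - y'⟫ - ν / 2 * ‖y - y'‖ ^ 2)
    (zt ztp : E × F) (xs : E) (ys : F)
    (hzt : zt.1 ∈ X ∧ zt.2 ∈ Y) (hztp : ztp.1 ∈ X ∧ ztp.2 ∈ Y)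
    (hxs : xs ∈ X) (hys : ys ∈ Y)
    -- z* = (xs, ys) is a Nash equilibrium, supplying the potential nonnegativity:
    (hpot : 0 ≤ g ztp - g (xs, ys) + h (ztp.1, ys) - h (xs, ztp.2))
    -- inexact solution of the linearized zero-sum subproblem:
    (hinexact :
      ⟪Gx zt + Hx ztp + ηt⁻¹ • (ztp.1 - zt.1), ztp.1 - xs⟫
        + ⟪Gy zt - Hy ztp + ηt⁻¹ • (ztp.2 - zt.2), ztp.2 - ys⟫ ≤ εt) :
    (1 / (2 * ηt) + min μ ν / 2) * (‖ztp.1 - xs‖ ^ 2 + ‖ztp.2 - ys‖ ^ 2)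
      ≤ 1 / (2 * ηt) * (‖zt.1 - xs‖ ^ 2 + ‖zt.2 - ys‖ ^ 2) + εt := by

  set u := ztp.1 - xs with hu
  set p := ztp.2 - ys with hp
  -- expand inexact inequality
  rw [inner_add_left, inner_add_left, inner_add_left, inner_sub_left,
    real_inner_smul_left, real_inner_smul_left] at hinexact
  have hdx : ztp.1 - zt.1 = u - (zt.1 - xs) := by rw [hu]; abel
  have hdy : ztp.2 - zt.2 = p - (zt.2 - ys) := by rw [hp]; abel
  have e1 : ⟪ztp.1 - zt.1, u⟫ = (‖u‖ ^ 2 + ‖ztp.1 - zt.1‖ ^ 2 - ‖zt.1 - xs‖ ^ 2) / 2 := by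
    rw [hdx]; exact icl_inner_half u (zt.1 - xs)
  have e2 : ⟪ztp.2 - zt.2, p⟫ = (‖p‖ ^ 2 + ‖ztp.2 - zt.2‖ ^ 2 - ‖zt.2 - ys‖ ^ 2) / 2 := by
    rw [hdy]; exact icl_inner_half p (zt.2 - ys)
  -- gradient-type bound from convexity + smoothness + strong convexity/concavity
  have c1 : g zt - g (xs, ys) ≤ ⟪Gx zt, zt.1 - xs⟫ + ⟪Gy zt, zt.2 - ys⟫ := hg_conv zt (xs, ys)
  have c2 := hg_smooth zt ztp
  have c3 := hh_sc xs ztp.1 ztp.2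
  have c4 := hh_scc ztp.1 ys ztp.2
  have sx : ⟪Gx zt, zt.1 - xs⟫ + ⟪Gx zt, ztp.1 - zt.1⟫ = ⟪Gx zt, u⟫ := by
    rw [← inner_add_right]; congr 1; rw [hu]; abel
  have sy : ⟪Gy zt, zt.2 - ys⟫ + ⟪Gy zt, ztp.2 - zt.2⟫ = ⟪Gy zt, p⟫ := by
    rw [← inner_add_right]; congr 1; rw [hp]; abel
  have c3' : h ztp - h (xs, ztp.2) ≤ ⟪Hx ztp, u⟫ - μ / 2 * ‖u‖ ^ 2 := by
    simpa using c3
  have c4' : h (ztp.1, ys) - h ztp ≤ -⟪Hy ztp, p⟫ - ν / 2 * ‖p‖ ^ 2 := by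
    have : ⟪Hy (ztp.1, ztp.2), ys - ztp.2⟫ = -⟪Hy ztp, p⟫ := by
      have : ys - ztp.2 = -p := by rw [hp]; abel
      rw [this, inner_neg_right]
    have hn : ‖ys - ztp.2‖ = ‖p‖ := by rw [hp, norm_sub_rev]
    rw [this, hn] at c4
    simpa using c4
  have key : 0 ≤ ⟪Gx zt, u⟫ + ⟪Hx ztp, u⟫ + ⟪Gy zt, p⟫ - ⟪Hy ztp, p⟫
      + δ / 2 * (‖ztp.1 - zt.1‖ ^ 2 + ‖ztp.2 - zt.2‖ ^ 2)
      - μ / 2 * ‖u‖ ^ 2 - ν / 2 * ‖p‖ ^ 2 := by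
    linarith [c1, c2, c3', c4', hpot, sx, sy]
  rw [e1, e2] at hinexact
  have hδη : δ ≤ ηt⁻¹ := by
    rw [← one_div, le_div_iff₀ hη]; linarith
  have hη2 : 1 / (2 * ηt) = ηt⁻¹ / 2 := by field_simp
  rw [hη2]
  have hmin1 : min μ ν ≤ μ := min_le_left μ ν
  have hmin2 : min μ ν ≤ ν := min_le_right μ ν
  have h1 : min μ ν * ‖u‖ ^ 2 ≤ μ * ‖u‖ ^ 2 := mul_le_mul_of_nonneg_right hmin1 (sq_nonneg _)
  have h2 : min μ ν * ‖p‖ ^ 2 ≤ ν * ‖p‖ ^ 2 := mul_le_mul_of_nonneg_right hmin2 (sq_nonneg _)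
  have h3 : 0 ≤ (ηt⁻¹ - δ) * (‖ztp.1 - zt.1‖ ^ 2 + ‖ztp.2 - zt.2‖ ^ 2) :=
    mul_nonneg (sub_nonneg.mpr hδη)
      (add_nonneg (sq_nonneg ‖ztp.1 - zt.1‖) (sq_nonneg ‖ztp.2 - zt.2‖))
  ring_nf at key hinexact h1 h2 h3 ⊢
  linarith
end

section
/- Approximate-first-order bound: in a monotone general-sum game with L-smooth utilities, let z* = (x*,y*) be the Nash equilibrium, let z̄ = (x̄,ȳ) ∈ X × Y and γ ∈ (0, 1/(√2·L)]. Define x̂ = Π_X(x̄ + γ∇ₓu₁(x̄,ȳ)), ŷ = Π_Y(ȳ + γ∇ᵧu₂(x̄,ȳ)). Then max_{x∈X, y∈Y} [u₁(x,ŷ) − u₁(x̂,ŷ) + u₂(x̂,y) − u₂(x̂,ŷ)] ≤ (2/γ)·√(D_X² + D_Y²)·‖z̄ − z*‖, where D_X, D_Y bound the diameters of X, Y. -/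
/-!
Work on the `L²` product `z = (x, y)` with the pseudo-gradient `G = (∇ₓu₁, ∇ᵧu₂)`, so that `-G`
is monotone and `√2 L`-Lipschitz, `ẑ = Π(z̄ + γ G z̄)` and, by the first-order conditions,
`z* = Π(z* + γ G z*)`. Concavity bounds the gap at `ẑ` by `⟪G ẑ, z - ẑ⟫`. Splitting
`z - ẑ = (z - z*) + (z* - ẑ)` and using the projection inequality at `ẑ` together with the cosine
law gives `γ ⟪G ẑ, z - ẑ⟫ ≤ ‖ẑ - z*‖ ‖z - z*‖ + ‖z̄ - z*‖² / 2`. Nonexpansiveness of the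
projection and monotonicity give `‖ẑ - z*‖ ≤ ‖(z̄ - z*) + γ (G z̄ - G z*)‖ ≤ √2 ‖z̄ - z*‖`;
with `D = √(D_X² + D_Y²)` bounding `‖z - z*‖` and `‖z̄ - z*‖` this yields
`γ ⟪G ẑ, z - ẑ⟫ ≤ (√2 + 1/2) D ‖z̄ - z*‖ ≤ 2 D ‖z̄ - z*‖`.
-/

open scoped RealInnerProductSpace NNReal

theorem ConcaveOn.sub_le_inner_gradient {E : Type*} [NormedAddCommGroup E]
    [InnerProductSpace ℝ E] [CompleteSpace E] {s : Set E} {f : E → ℝ} {g a b : E}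
    (hf : ConcaveOn ℝ s f) (ha : a ∈ s) (hb : b ∈ s) (hg : HasGradientAt f g a) :
    f b - f a ≤ ⟪g, b - a⟫ := by
  have hd : HasDerivAt (f ∘ AffineMap.lineMap (k := ℝ) a b) ⟪g, b - a⟫ 0 := by
    simpa using hg.hasFDerivAt.comp_hasDerivAt_of_eq (0 : ℝ) AffineMap.hasDerivAt_lineMap
      (AffineMap.lineMap_apply_zero a b).symm
  simpa [slope_def_field] using
    (hf.comp_affineMap (AffineMap.lineMap a b)).slope_le_of_hasDerivAt (x := 0) (y := 1)
      (by simpa) (by simpa) one_pos hd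

section Projection

variable {H : Type*} [NormedAddCommGroup H] [InnerProductSpace ℝ H] {K : Set H} {v u p q : H}

/-- `p` is the metric projection of `v` onto `K`, in variational form (for convex `K` this is
the nearest-point property, see `isMetricProj_of_forall_norm_sub_le`). -/
def IsMetricProj (K : Set H) (v p : H) : Prop :=
  p ∈ K ∧ ∀ w ∈ K, ⟪v - p, w - p⟫ ≤ 0

theorem isMetricProj_of_forall_norm_sub_le (hK : Convex ℝ K) (hp : p ∈ K)
    (hmin : ∀ w ∈ K, ‖v - p‖ ≤ ‖v - w‖) : IsMetricProj K v p := by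
  refine ⟨hp, (norm_eq_iInf_iff_real_inner_le_zero hK hp).mp (le_antisymm ?_ ?_)⟩
  · have : Nonempty K := ⟨⟨p, hp⟩⟩
    exact le_ciInf fun w => hmin w w.2
  · have hbdd : BddBelow (Set.range fun w : K => ‖v - (w : H)‖) :=
      ⟨0, by rintro _ ⟨w, rfl⟩; exact norm_nonneg _⟩
    exact ciInf_le hbdd ⟨p, hp⟩

theorem IsMetricProj.norm_sub_le (hp : IsMetricProj K v p) (hq : IsMetricProj K u q) :
    ‖p - q‖ ≤ ‖v - u‖ := by
  have hpq : 0 ≤ ⟪v - p, p - q⟫ := by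
    have := hp.2 q hq.1
    rwa [← neg_sub p q, inner_neg_right, neg_nonpos] at this
  have hqp := hq.2 p hp.1
  have hsplit : ⟪v - u, p - q⟫ = ‖p - q‖ ^ 2 + ⟪v - p, p - q⟫ - ⟪u - q, p - q⟫ := by
    rw [← real_inner_self_eq_norm_sq, ← inner_add_left, ← inner_sub_left]
    congr 1
    abel
  have hsq : ‖p - q‖ ^ 2 ≤ ‖v - u‖ * ‖p - q‖ := by
    linarith [real_inner_le_norm (v - u) (p - q)]
  nlinarith [norm_nonneg (p - q), norm_nonneg (v - u)]

theorem IsMaxOn.isMetricProj_add_smul_gradient {E : Type*} [NormedAddCommGroup E]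
    [InnerProductSpace ℝ E] [CompleteSpace E] {s : Set E} {f : E → ℝ} {g a : E} {γ : ℝ}
    (hs : Convex ℝ s) (hmax : IsMaxOn f s a) (ha : a ∈ s) (hg : HasGradientAt f g a)
    (hγ : 0 ≤ γ) : IsMetricProj s (a + γ • g) a := by
  refine ⟨ha, fun b hb => ?_⟩
  rw [add_sub_cancel_left, real_inner_smul_left]
  refine mul_nonpos_of_nonneg_of_nonpos hγ ?_
  simpa using hmax.localize.hasFDerivWithinAt_nonpos hg.hasFDerivAt.hasFDerivWithinAt
    (sub_mem_posTangentConeAt_of_segment_subset (hs.segment_subset ha hb))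

theorem IsMetricProj.prod {E F : Type*} [NormedAddCommGroup E] [InnerProductSpace ℝ E]
    [NormedAddCommGroup F] [InnerProductSpace ℝ F] {X : Set E} {Y : Set F}
    {v₁ p₁ : E} {v₂ p₂ : F}
    (h₁ : IsMetricProj X v₁ p₁) (h₂ : IsMetricProj Y v₂ p₂) :
    IsMetricProj (WithLp.ofLp ⁻¹' X ×ˢ Y) (WithLp.toLp 2 (v₁, v₂)) (WithLp.toLp 2 (p₁, p₂)) :=
  ⟨⟨h₁.1, h₂.1⟩, fun w hw => by simpa using add_nonpos (h₁.2 _ hw.1) (h₂.2 _ hw.2)⟩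

end Projection

section ProjectedGradientStep

variable {H : Type*} [NormedAddCommGroup H] [InnerProductSpace ℝ H] {K : Set H} {G : H → H}
  {M : ℝ≥0} {γ D : ℝ} {zs zb zh z : H}

theorem LipschitzWith.norm_smul_sub_le (hG : LipschitzWith M G) (hγ : 0 ≤ γ) (hγM : γ * M ≤ 1)
    (a b : H) : ‖γ • (G a - G b)‖ ≤ ‖a - b‖ :=
  calc ‖γ • (G a - G b)‖ = γ * ‖G a - G b‖ := by rw [norm_smul, Real.norm_of_nonneg hγ]
    _ ≤ γ * (M * ‖a - b‖) := by gcongr; exact hG.norm_sub_le a b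
    _ ≤ ‖a - b‖ := by rw [← mul_assoc]; exact mul_le_of_le_one_left (norm_nonneg _) hγM

theorem norm_add_le_sqrt_two_mul {a b : H} (hab : ⟪a, b⟫ ≤ 0) (hba : ‖b‖ ≤ ‖a‖) :
    ‖a + b‖ ≤ √2 * ‖a‖ := by
  rw [← pow_le_pow_iff_left₀ (norm_nonneg _) (by positivity) two_ne_zero, mul_pow,
    Real.sq_sqrt zero_le_two, norm_add_sq_real]
  nlinarith [norm_nonneg b]

theorem norm_add_smul_sub_add_smul_le (hmono : ⟪G zb - G zs, zb - zs⟫ ≤ 0)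
    (hG : LipschitzWith M G) (hγ : 0 ≤ γ) (hγM : γ * M ≤ 1) :
    ‖(zb + γ • G zb) - (zs + γ • G zs)‖ ≤ √2 * ‖zb - zs‖ := by
  have hsplit : (zb + γ • G zb) - (zs + γ • G zs) = (zb - zs) + γ • (G zb - G zs) := by
    rw [smul_sub]; abel
  rw [hsplit]
  refine norm_add_le_sqrt_two_mul ?_ (hG.norm_smul_sub_le hγ hγM zb zs)
  rw [real_inner_smul_right, real_inner_comm]
  exact mul_nonpos_of_nonneg_of_nonpos hγ hmono

theorem inner_smul_projStep_le (hzs : IsMetricProj K (zs + γ • G zs) zs)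
    (hzh : IsMetricProj K (zb + γ • G zb) zh) (hz : z ∈ K) (hG : LipschitzWith M G)
    (hγ : 0 ≤ γ) (hγM : γ * M ≤ 1) :
    ⟪γ • G zh, z - zh⟫ ≤ ‖zh - zs‖ * ‖z - zs‖ + ‖zb - zs‖ ^ 2 / 2 := by
  have hsplit : ⟪γ • G zh, z - zh⟫ = ⟪γ • (G zh - G zs), z - zs⟫ + ⟪γ • G zs, z - zs⟫
      + ⟪γ • (G zh - G zb), zs - zh⟫ + ⟪γ • G zb, zs - zh⟫ := by
    rw [← sub_add_sub_cancel z zs zh]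
    simp only [smul_sub, inner_add_right, inner_sub_left]
    ring
  have h₁ : ⟪γ • (G zh - G zs), z - zs⟫ ≤ ‖zh - zs‖ * ‖z - zs‖ :=
    (real_inner_le_norm _ _).trans (by gcongr; exact hG.norm_smul_sub_le hγ hγM zh zs)
  have h₂ : ⟪γ • G zs, z - zs⟫ ≤ 0 := by simpa using hzs.2 z hz
  have h₃ : ⟪γ • (G zh - G zb), zs - zh⟫ ≤ ‖zh - zb‖ * ‖zh - zs‖ := by
    refine (real_inner_le_norm _ _).trans ?_
    rw [norm_sub_rev zs zh]
    gcongr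
    exact hG.norm_smul_sub_le hγ hγM zh zb
  have h₄ : ⟪γ • G zb, zs - zh⟫ ≤ ⟪zh - zb, zs - zh⟫ := by
    have := hzh.2 zs hzs.1
    rw [add_sub_right_comm, inner_add_left, ← neg_sub zh zb, inner_neg_left] at this
    linarith
  have hcosine : 2 * ⟪zh - zb, zs - zh⟫ = ‖zb - zs‖ ^ 2 - ‖zh - zb‖ ^ 2 - ‖zh - zs‖ ^ 2 := by
    rw [norm_sub_rev zb zs, norm_sub_rev zh zs, ← sub_add_sub_cancel zs zh zb, norm_add_sq_real,
      real_inner_comm]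
    ring
  linarith [sq_nonneg (‖zh - zb‖ - ‖zh - zs‖)]

theorem inner_smul_projStep_le_diam_mul
    (hmono : ∀ z ∈ K, ∀ z' ∈ K, ⟪G z' - G z, z' - z⟫ ≤ 0) (hG : LipschitzWith M G)
    (hγ : 0 ≤ γ) (hγM : γ * M ≤ 1) (hD : ∀ z ∈ K, ∀ z' ∈ K, ‖z - z'‖ ≤ D)
    (hzs : IsMetricProj K (zs + γ • G zs) zs) (hzb : zb ∈ K)
    (hzh : IsMetricProj K (zb + γ • G zb) zh) (hz : z ∈ K) :
    ⟪γ • G zh, z - zh⟫ ≤ 2 * D * ‖zb - zs‖ := by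
  have hzh_zs : ‖zh - zs‖ ≤ √2 * ‖zb - zs‖ :=
    (hzh.norm_sub_le hzs).trans (norm_add_smul_sub_add_smul_le (hmono zs hzs.1 zb hzb) hG hγ hγM)
  have hzb_zs : ‖zb - zs‖ ≤ D := hD zb hzb zs hzs.1
  have hz_zs : ‖z - zs‖ ≤ D := hD z hz zs hzs.1
  have hsqrt2 : √2 ≤ 3 / 2 := by
    rw [Real.sqrt_le_left (by norm_num)]; norm_num
  calc ⟪γ • G zh, z - zh⟫ ≤ ‖zh - zs‖ * ‖z - zs‖ + ‖zb - zs‖ ^ 2 / 2 :=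
        inner_smul_projStep_le hzs hzh hz hG hγ hγM
    _ ≤ (3 / 2 * ‖zb - zs‖) * D + ‖zb - zs‖ * D / 2 := by
        gcongr
        · exact hzh_zs.trans (by gcongr)
        · rw [sq]; gcongr
    _ = 2 * D * ‖zb - zs‖ := by ring

end ProjectedGradientStep

theorem WithLp.prod_norm_le_sqrt {α β : Type*} [SeminormedAddCommGroup α]
    [SeminormedAddCommGroup β] {z : WithLp 2 (α × β)} {a b : ℝ} (ha : ‖z.fst‖ ≤ a)
    (hb : ‖z.snd‖ ≤ b) : ‖z‖ ≤ √(a ^ 2 + b ^ 2) := by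
  rw [WithLp.prod_norm_eq_of_L2]
  gcongr

section Game

variable {E F : Type*} [NormedAddCommGroup E] [NormedAddCommGroup F]

/-- The operator `(∇ₓu₁, ∇ᵧu₂)`, i.e. `-F` in the paper's notation, on the `L²` product. -/
def pseudoGradient (g₁ : E × F → E) (g₂ : E × F → F) (z : WithLp 2 (E × F)) :
    WithLp 2 (E × F) :=
  WithLp.toLp 2 (g₁ z.ofLp, g₂ z.ofLp)

theorem lipschitzWith_pseudoGradient {g₁ : E × F → E} {g₂ : E × F → F} {L : ℝ} (hL : 0 ≤ L)
    (hLip₁ : ∀ z z' : E × F,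
      ‖g₁ z' - g₁ z‖ ≤ L * Real.sqrt (‖z'.1 - z.1‖ ^ 2 + ‖z'.2 - z.2‖ ^ 2))
    (hLip₂ : ∀ z z' : E × F,
      ‖g₂ z' - g₂ z‖ ≤ L * Real.sqrt (‖z'.1 - z.1‖ ^ 2 + ‖z'.2 - z.2‖ ^ 2)) :
    LipschitzWith ⟨√2 * L, by positivity⟩ (pseudoGradient g₁ g₂) := by
  refine LipschitzWith.of_dist_le_mul fun z z' => ?_
  have h₁ : ‖g₁ z.ofLp - g₁ z'.ofLp‖ ≤ L * ‖z - z'‖ := by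
    simpa [WithLp.prod_norm_eq_of_L2] using hLip₁ z'.ofLp z.ofLp
  have h₂ : ‖g₂ z.ofLp - g₂ z'.ofLp‖ ≤ L * ‖z - z'‖ := by
    simpa [WithLp.prod_norm_eq_of_L2] using hLip₂ z'.ofLp z.ofLp
  rw [dist_eq_norm, dist_eq_norm]
  show _ ≤ √2 * L * ‖z - z'‖
  calc ‖pseudoGradient g₁ g₂ z - pseudoGradient g₁ g₂ z'‖
      ≤ √((L * ‖z - z'‖) ^ 2 + (L * ‖z - z'‖) ^ 2) := WithLp.prod_norm_le_sqrt h₁ h₂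
    _ = √2 * L * ‖z - z'‖ := by
      rw [← two_mul, Real.sqrt_mul zero_le_two, Real.sqrt_sq (by positivity), mul_assoc]

end Game

theorem approximate_first_order_bound_general
    {E F : Type*} [NormedAddCommGroup E] [InnerProductSpace ℝ E] [CompleteSpace E]
    [NormedAddCommGroup F] [InnerProductSpace ℝ F] [CompleteSpace F]
    (X : Set E) (Y : Set F) (hXc : Convex ℝ X) (hYc : Convex ℝ Y)
    (DX DY : ℝ)
    (hDX : ∀ a ∈ X, ∀ b ∈ X, dist a b ≤ DX)
    (hDY : ∀ a ∈ Y, ∀ b ∈ Y, dist a b ≤ DY)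
    (u₁ u₂ : E × F → ℝ)
    (g₁ : E × F → E) (g₂ : E × F → F)  -- g₁ = ∇ₓu₁, g₂ = ∇ᵧu₂
    (hg₁ : ∀ z : E × F, HasGradientAt (fun x => u₁ (x, z.2)) (g₁ z) z.1)
    (hg₂ : ∀ z : E × F, HasGradientAt (fun y => u₂ (z.1, y)) (g₂ z) z.2)
    (hu₁_conc : ∀ y : F, ConcaveOn ℝ X (fun x => u₁ (x, y)))
    (hu₂_conc : ∀ x : E, ConcaveOn ℝ Y (fun y => u₂ (x, y)))
    (L : ℝ) (hL : 0 < L)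
    -- L-smoothness of the utilities (Lipschitz gradients in the product norm):
    (hLip₁ : ∀ z z' : E × F,
      ‖g₁ z' - g₁ z‖ ≤ L * Real.sqrt (‖z'.1 - z.1‖ ^ 2 + ‖z'.2 - z.2‖ ^ 2))
    (hLip₂ : ∀ z z' : E × F,
      ‖g₂ z' - g₂ z‖ ≤ L * Real.sqrt (‖z'.1 - z.1‖ ^ 2 + ‖z'.2 - z.2‖ ^ 2))
    -- monotonicity of the game operator F = −(∇ₓu₁, ∇ᵧu₂):
    (hmono : ∀ z, z.1 ∈ X ∧ z.2 ∈ Y → ∀ z' : E × F, z'.1 ∈ X ∧ z'.2 ∈ Y →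
      ⟪g₁ z' - g₁ z, z'.1 - z.1⟫ + ⟪g₂ z' - g₂ z, z'.2 - z.2⟫ ≤ 0)
    -- z* = (xs, ys) is the Nash equilibrium:
    (xs : E) (ys : F) (hxs : xs ∈ X) (hys : ys ∈ Y)
    (hNash₁ : ∀ x ∈ X, u₁ (x, ys) ≤ u₁ (xs, ys))
    (hNash₂ : ∀ y ∈ Y, u₂ (xs, y) ≤ u₂ (xs, ys))
    (γ : ℝ) (hγ0 : 0 < γ) (hγL : γ ≤ 1 / (Real.sqrt 2 * L))
    (xb : E) (yb : F) (hxb : xb ∈ X) (hyb : yb ∈ Y)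
    -- x̂ = Π_X(x̄ + γ∇ₓu₁(z̄)), ŷ = Π_Y(ȳ + γ∇ᵧu₂(z̄)) (metric projections):
    (xh : E) (yh : F) (hxh : xh ∈ X) (hyh : yh ∈ Y)
    (hxh_proj : ∀ w ∈ X, ‖xb + γ • g₁ (xb, yb) - xh‖ ≤ ‖xb + γ • g₁ (xb, yb) - w‖)
    (hyh_proj : ∀ w ∈ Y, ‖yb + γ • g₂ (xb, yb) - yh‖ ≤ ‖yb + γ • g₂ (xb, yb) - w‖) :
    ∀ x ∈ X, ∀ y ∈ Y,
      u₁ (x, yh) - u₁ (xh, yh) + u₂ (xh, y) - u₂ (xh, yh)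
        ≤ 2 / γ * Real.sqrt (DX ^ 2 + DY ^ 2)
            * Real.sqrt (‖xb - xs‖ ^ 2 + ‖yb - ys‖ ^ 2) := by
  intro x hx y hy
  set K : Set (WithLp 2 (E × F)) := WithLp.ofLp ⁻¹' X ×ˢ Y
  set G := pseudoGradient g₁ g₂
  have hmonoG : ∀ z ∈ K, ∀ z' ∈ K, ⟪G z' - G z, z' - z⟫ ≤ 0 := fun z hz z' hz' => by
    simpa [G, pseudoGradient] using hmono z.ofLp hz z'.ofLp hz'
  have hγM : γ * (⟨√2 * L, by positivity⟩ : ℝ≥0) ≤ 1 :=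
    (le_div_iff₀ (by positivity)).mp hγL
  have hdiam : ∀ z ∈ K, ∀ z' ∈ K, ‖z - z'‖ ≤ √(DX ^ 2 + DY ^ 2) := fun z hz z' hz' =>
    WithLp.prod_norm_le_sqrt (by simpa [dist_eq_norm] using hDX _ hz.1 _ hz'.1)
      (by simpa [dist_eq_norm] using hDY _ hz.2 _ hz'.2)
  have hzs : IsMetricProj K (WithLp.toLp 2 (xs, ys) + γ • G (WithLp.toLp 2 (xs, ys)))
      (WithLp.toLp 2 (xs, ys)) :=
    ((isMaxOn_iff.mpr hNash₁).isMetricProj_add_smul_gradient hXc hxs (hg₁ (xs, ys)) hγ0.le).prod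
      ((isMaxOn_iff.mpr hNash₂).isMetricProj_add_smul_gradient hYc hys (hg₂ (xs, ys)) hγ0.le)
  have hzh : IsMetricProj K (WithLp.toLp 2 (xb, yb) + γ • G (WithLp.toLp 2 (xb, yb)))
      (WithLp.toLp 2 (xh, yh)) :=
    (isMetricProj_of_forall_norm_sub_le hXc hxh hxh_proj).prod
      (isMetricProj_of_forall_norm_sub_le hYc hyh hyh_proj)
  have hgap : u₁ (x, yh) - u₁ (xh, yh) + u₂ (xh, y) - u₂ (xh, yh)
      ≤ ⟪G (WithLp.toLp 2 (xh, yh)), WithLp.toLp 2 (x, y) - WithLp.toLp 2 (xh, yh)⟫ := by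
    simpa [G, pseudoGradient, add_sub_assoc] using
      add_le_add ((hu₁_conc yh).sub_le_inner_gradient hxh hx (hg₁ (xh, yh)))
        ((hu₂_conc xh).sub_le_inner_gradient hyh hy (hg₂ (xh, yh)))
  have hstep := inner_smul_projStep_le_diam_mul hmonoG
    (lipschitzWith_pseudoGradient hL.le hLip₁ hLip₂) hγ0.le hγM hdiam hzs ⟨hxb, hyb⟩ hzh
    (z := WithLp.toLp 2 (x, y)) ⟨hx, hy⟩
  rw [real_inner_smul_left, WithLp.prod_norm_eq_of_L2] at hstep
  have hscaled := (mul_le_mul_of_nonneg_left hgap hγ0.le).trans hstep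
  rw [mul_assoc, div_mul_eq_mul_div, le_div_iff₀' hγ0, ← mul_assoc]
  simpa using hscaled

/-- Approximate-first-order bound (Proposition on extragradient-type certificates):
in a monotone general-sum game with `L`-smooth utilities, one projected-gradient step
from `z̄` yields a point `(x̂, ŷ)` whose Nash gap is bounded by
`(2/γ)·√(D_X² + D_Y²)·‖z̄ − z*‖`. -/
theorem approximate_first_order_bound
    {E F : Type*} [NormedAddCommGroup E] [InnerProductSpace ℝ E] [CompleteSpace E]
    [NormedAddCommGroup F] [InnerProductSpace ℝ F] [CompleteSpace F]
    (X : Set E) (Y : Set F) (hXc : Convex ℝ X) (hYc : Convex ℝ Y)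
    (hXcp : IsCompact X) (hYcp : IsCompact Y)
    (DX DY : ℝ)
    (hDX : ∀ a ∈ X, ∀ b ∈ X, dist a b ≤ DX)
    (hDY : ∀ a ∈ Y, ∀ b ∈ Y, dist a b ≤ DY)
    (u₁ u₂ : E × F → ℝ)
    (g₁ : E × F → E) (g₂ : E × F → F)  -- g₁ = ∇ₓu₁, g₂ = ∇ᵧu₂
    (hg₁ : ∀ z : E × F, HasGradientAt (fun x => u₁ (x, z.2)) (g₁ z) z.1)
    (hg₂ : ∀ z : E × F, HasGradientAt (fun y => u₂ (z.1, y)) (g₂ z) z.2)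
    (hu₁_conc : ∀ y : F, ConcaveOn ℝ X (fun x => u₁ (x, y)))
    (hu₂_conc : ∀ x : E, ConcaveOn ℝ Y (fun y => u₂ (x, y)))
    (L : ℝ) (hL : 0 < L)
    -- L-smoothness of the utilities (Lipschitz gradients in the product norm):
    (hLip₁ : ∀ z z' : E × F,
      ‖g₁ z' - g₁ z‖ ≤ L * Real.sqrt (‖z'.1 - z.1‖ ^ 2 + ‖z'.2 - z.2‖ ^ 2))
    (hLip₂ : ∀ z z' : E × F,
      ‖g₂ z' - g₂ z‖ ≤ L * Real.sqrt (‖z'.1 - z.1‖ ^ 2 + ‖z'.2 - z.2‖ ^ 2))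
    -- monotonicity of the game operator F = −(∇ₓu₁, ∇ᵧu₂):
    (hmono : ∀ z, z.1 ∈ X ∧ z.2 ∈ Y → ∀ z' : E × F, z'.1 ∈ X ∧ z'.2 ∈ Y →
      ⟪g₁ z' - g₁ z, z'.1 - z.1⟫ + ⟪g₂ z' - g₂ z, z'.2 - z.2⟫ ≤ 0)
    -- z* = (xs, ys) is the Nash equilibrium:
    (xs : E) (ys : F) (hxs : xs ∈ X) (hys : ys ∈ Y)
    (hNash₁ : ∀ x ∈ X, u₁ (x, ys) ≤ u₁ (xs, ys))
    (hNash₂ : ∀ y ∈ Y, u₂ (xs, y) ≤ u₂ (xs, ys))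
    (γ : ℝ) (hγ0 : 0 < γ) (hγL : γ ≤ 1 / (Real.sqrt 2 * L))
    (xb : E) (yb : F) (hxb : xb ∈ X) (hyb : yb ∈ Y)
    -- x̂ = Π_X(x̄ + γ∇ₓu₁(z̄)), ŷ = Π_Y(ȳ + γ∇ᵧu₂(z̄)) (metric projections):
    (xh : E) (yh : F) (hxh : xh ∈ X) (hyh : yh ∈ Y)
    (hxh_proj : ∀ w ∈ X, ‖xb + γ • g₁ (xb, yb) - xh‖ ≤ ‖xb + γ • g₁ (xb, yb) - w‖)
    (hyh_proj : ∀ w ∈ Y, ‖yb + γ • g₂ (xb, yb) - yh‖ ≤ ‖yb + γ • g₂ (xb, yb) - w‖) :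
    ∀ x ∈ X, ∀ y ∈ Y,
      u₁ (x, yh) - u₁ (xh, yh) + u₂ (xh, y) - u₂ (xh, yh)
        ≤ 2 / γ * Real.sqrt (DX ^ 2 + DY ^ 2)
            * Real.sqrt (‖xb - xs‖ ^ 2 + ‖yb - ys‖ ^ 2) :=
  approximate_first_order_bound_general X Y hXc hYc DX DY hDX hDY u₁ u₂ g₁ g₂ hg₁ hg₂ hu₁_conc
    hu₂_conc L hL hLip₁ hLip₂ hmono xs ys hxs hys hNash₁ hNash₂ γ hγ0 hγL xb yb hxb hyb xh yh hxh
    hyh hxh_proj hyh_proj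
end
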